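/- If S is γ-stationary in κ and C is γ'-club in κ for some γ' < γ, then S ∩ C is γ-stationary in κ. -/

import Mathlib

open Set

namespace GenStat

/-- `S` is unbounded in (below) `κ`. -/
def Unbdd (S : Set Ordinal) (κ : Ordinal) : Prop :=
  ∀ β < κ, ∃ α ∈ S, β ≤ α ∧ α < κ

/-- `Stat γ S κ` : `S` is `γ`-stationary in `κ`.  Defined by recursion on `γ`:
`S` is `0`-stationary iff unbounded; `S` is `γ`-stationary iff for every `η < γ`,
`κ` is `η`-reflecting and `S` meets every `η`-club of `κ`. -/
def Stat (γ : Ordinal) (S : Set Ordinal) (κ : Ordinal) : Prop :=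
  (γ = 0 → Unbdd S κ) ∧
  ∀ η < γ,
    (∀ A B : Set Ordinal, A ⊆ Set.Iio κ → B ⊆ Set.Iio κ →
        Stat η A κ → Stat η B κ →
        ∃ α < κ, Stat η (A ∩ Set.Iio α) α ∧ Stat η (B ∩ Set.Iio α) α)
    ∧ (∀ C : Set Ordinal, C ⊆ Set.Iio κ → Stat η C κ →
        (∀ α < κ, Stat η (C ∩ Set.Iio α) α → α ∈ C) →
        (S ∩ C).Nonempty)
termination_by γ

/-- `κ` is `γ`-reflecting: any two `γ`-stationary subsets of `κ` are simultaneously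
`γ`-stationary below some `α < κ`. -/
def Reflecting (γ κ : Ordinal) : Prop :=
  ∀ A B : Set Ordinal, A ⊆ Set.Iio κ → B ⊆ Set.Iio κ →
    Stat γ A κ → Stat γ B κ →
    ∃ α < κ, Stat γ (A ∩ Set.Iio α) α ∧ Stat γ (B ∩ Set.Iio α) α

/-- `C` is `γ`-club in `κ`: `γ`-stationary in `κ` and `γ`-stationary-closed below `κ`. -/
def IsClub (γ : Ordinal) (C : Set Ordinal) (κ : Ordinal) : Prop :=
  C ⊆ Set.Iio κ ∧ Stat γ C κ ∧ ∀ α < κ, Stat γ (C ∩ Set.Iio α) α → α ∈ C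

/-- `d_γ(A)` relative to `κ` : the set of `α < κ` below which `A` is `γ`-stationary. -/
def dSet (γ : Ordinal) (A : Set Ordinal) (κ : Ordinal) : Set Ordinal :=
  {α | α < κ ∧ Stat γ (A ∩ Set.Iio α) α}

/-!
Induction on `γ`. To see that `S ∩ C` meets an `η`-club `D` with `η < γ`, show that `C ∩ D`
is a `max γ' η`-club and let `S` meet it. When the levels differ, `C ∩ D` is stationary by the
induction hypothesis at the larger level. When `γ' = η`, it meets every `ζ`-club `E`,
`ζ < η`: by induction `D ∩ E` is an `η`-club, and `η`-reflection of `κ` makes `C` and `D ∩ E`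
stationary below the same `α`, which then lies in `C ∩ D ∩ E` by closure.
-/

theorem stat_iff {γ : Ordinal} {S : Set Ordinal} {κ : Ordinal} :
    Stat γ S κ ↔ (γ = 0 → Unbdd S κ) ∧
      ∀ η < γ, Reflecting η κ ∧ ∀ C, IsClub η C κ → (S ∩ C).Nonempty := by
  rw [Stat]
  simp only [Reflecting, IsClub, and_imp]

theorem stat_intro {γ : Ordinal} {S : Set Ordinal} {κ : Ordinal}
    (h₀ : γ = 0 → Unbdd S κ) (hrefl : ∀ η < γ, Reflecting η κ)
    (hmeet : ∀ η < γ, ∀ C, IsClub η C κ → (S ∩ C).Nonempty) : Stat γ S κ :=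
  stat_iff.2 ⟨h₀, fun η hη => ⟨hrefl η hη, hmeet η hη⟩⟩

namespace Stat

variable {γ η : Ordinal} {S T : Set Ordinal} {κ : Ordinal}

theorem unbdd (h : Stat 0 S κ) : Unbdd S κ :=
  (stat_iff.1 h).1 rfl

theorem reflecting (h : Stat γ S κ) (hη : η < γ) : Reflecting η κ :=
  ((stat_iff.1 h).2 η hη).1

theorem inter_nonempty (h : Stat γ S κ) (hη : η < γ) {C : Set Ordinal} (hC : IsClub η C κ) :
    (S ∩ C).Nonempty :=
  ((stat_iff.1 h).2 η hη).2 C hC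

theorem mono (hST : S ⊆ T) (h : Stat γ S κ) : Stat γ T κ := by
  refine stat_intro (fun hγ β hβ => ?_) (fun η hη => h.reflecting hη)
    fun η hη C hC => (h.inter_nonempty hη hC).mono (inter_subset_inter_left C hST)
  obtain ⟨α, hαS, hα⟩ := (hγ ▸ h).unbdd β hβ
  exact ⟨α, hST hαS, hα⟩

theorem of_le (hη : η ≠ 0) (hle : η ≤ γ) (h : Stat γ S κ) : Stat η S κ :=
  stat_intro (fun h₀ => absurd h₀ hη) (fun _ hθ => h.reflecting (hθ.trans_le hle))
    fun _ hθ _ hC => h.inter_nonempty (hθ.trans_le hle) hC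

end Stat

namespace IsClub

variable {γ η : Ordinal} {C D : Set Ordinal} {κ α : Ordinal}

/-- By induction on `α < κ`: once `Iio α ⊆ C`, `C` is unbounded below `α`, so `α ∈ C`. -/
theorem eq_Iio_of_zero (hC : IsClub 0 C κ) : C = Iio κ := by
  refine hC.1.antisymm fun α => ?_
  induction α using WellFoundedLT.induction with
  | _ α ih =>
    intro hα
    refine hC.2.2 α hα
      (stat_intro (fun _ β hβ => ⟨β, ⟨ih β hβ (hβ.trans hα), hβ⟩, le_rfl, hβ⟩)
        (fun _ hη => absurd hη zero_le.not_gt) fun _ hη => absurd hη zero_le.not_gt)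

theorem mem_of_stat_of_le (hC : IsClub γ C κ) (hle : γ ≤ η) (hα : α < κ)
    (h : Stat η (C ∩ Iio α) α) : α ∈ C := by
  rcases eq_or_ne γ 0 with rfl | hγ
  · exact hC.eq_Iio_of_zero ▸ hα
  · exact hC.2.2 α hα (h.of_le hγ hle)

theorem inter {θ : Ordinal} (hC : IsClub γ C κ) (hD : IsClub η D κ) (hγ : γ ≤ θ)
    (hη : η ≤ θ) (h : Stat θ (C ∩ D) κ) : IsClub θ (C ∩ D) κ :=
  ⟨inter_subset_left.trans hC.1, h, fun _ hα hα' =>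
    ⟨hC.mem_of_stat_of_le hγ hα (hα'.mono (inter_subset_inter_left _ inter_subset_left)),
      hD.mem_of_stat_of_le hη hα (hα'.mono (inter_subset_inter_left _ inter_subset_right))⟩⟩

end IsClub

theorem stat_inter_of_reflecting {η κ : Ordinal} {C D : Set Ordinal}
    (hrefl : Reflecting η κ) (hC : IsClub η C κ) (hD : IsClub η D κ)
    (hDE : ∀ ζ < η, ∀ E, IsClub ζ E κ → Stat η (D ∩ E) κ) : Stat η (C ∩ D) κ := by
  refine stat_intro (fun hη β hβ => ?_) (fun ζ hζ => hC.2.1.reflecting hζ)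
    fun ζ hζ E hE => ?_
  · subst hη
    obtain ⟨α, hαC, hα⟩ := hC.2.1.unbdd β hβ
    exact ⟨α, ⟨hαC, hD.eq_Iio_of_zero ▸ hα.2⟩, hα⟩
  · have hDE_club : IsClub η (D ∩ E) κ := hD.inter hE le_rfl hζ.le (hDE ζ hζ E hE)
    obtain ⟨α, hα, hαC, hαDE⟩ := hrefl C (D ∩ E) hC.1 hDE_club.1 hC.2.1 hDE_club.2.1
    obtain ⟨hαD, hαE⟩ := hDE_club.2.2 α hα hαDE
    exact ⟨α, ⟨hC.2.2 α hα hαC, hαD⟩, hαE⟩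

/-- If `S` is `γ`-stationary in `κ` and `C` is `γ'`-club in `κ` for some
`γ' < γ`, then `S ∩ C` is `γ`-stationary in `κ`. -/
theorem stat_inter_club (κ γ γ' : Ordinal) (S C : Set Ordinal)
    (hS : Stat γ S κ) (h : γ' < γ) (hC : IsClub γ' C κ) :
    Stat γ (S ∩ C) κ := by
  induction γ using WellFoundedLT.induction generalizing κ γ' S C with
  | _ γ ih =>
  refine stat_intro (fun hγ => absurd (hγ ▸ h) zero_le.not_gt)
    (fun η hη => hS.reflecting hη) fun η hη D hD => ?_
  have hCD : Stat (max γ' η) (C ∩ D) κ := by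
    rcases lt_trichotomy γ' η with hlt | rfl | hgt
    · rw [max_eq_right hlt.le, inter_comm]
      exact ih η hη κ γ' D C hD.2.1 hlt hC
    · rw [max_self]
      exact stat_inter_of_reflecting (hS.reflecting h) hC hD
        fun ζ hζ E hE => ih γ' h κ ζ D E hD.2.1 hζ hE
    · rw [max_eq_left hgt.le]
      exact ih γ' h κ η C D hC.2.1 hgt hD
  obtain ⟨x, hxS, hxC, hxD⟩ :=
    hS.inter_nonempty (max_lt h hη) (hC.inter hD (le_max_left γ' η) (le_max_right γ' η) hCD)
  exact ⟨x, ⟨hxS, hxC⟩, hxD⟩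

end GenStat
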